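/- For all integers j, k with 3 ≤ j < k, let m_j and m_k denote the middle-left bottleneck points of h_j and h_k respectively. For every grid path p_0, p_1, …, p_n in the H fractal 𝐇 such that p_0 = m_j, each of p_1, …, p_n lies in the left-center of h_j, and the second coordinate of p_n is at least (second coordinate of m_j) + 2·3^{j-3}, there exists an index l ≤ n such that p_l + m_k − m_j ∉ 𝐇. -/
import Mathlib


/-- A point of the integer lattice `ℤ²`. -/
abbrev Pt := ℤ × ℤ

/-- Two points are grid-adjacent when their `ℓ¹` distance is `1`. -/
def adjPt (p q : Pt) : Prop := |p.1 - q.1| + |p.2 - q.2| = 1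

/-- The generator of the H fractal. -/
def GH : Set Pt := {(0,0),(0,1),(0,2),(1,1),(2,0),(2,1),(2,2)}

/-- `scaleAdd k A B = A + k·B` (componentwise). -/
def scaleAdd (k : ℤ) (A B : Set Pt) : Set Pt :=
  {q | ∃ p ∈ A, ∃ g ∈ B, q = (p.1 + k * g.1, p.2 + k * g.2)}

/-- The stages of the H fractal: `hstage 1 = GH` and
`hstage (i+1) = hstage i + 3^i · GH` for `i ≥ 1`. -/
def hstage : ℕ → Set Pt
  | 0 => ∅
  | 1 => GH
  | n + 2 => scaleAdd (3 ^ (n + 1)) (hstage (n + 1)) GH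

/-- The H fractal `𝐇 = ⋃_{i ≥ 1} h_i`. -/
def HFractal : Set Pt := {p | ∃ i : ℕ, 1 ≤ i ∧ p ∈ hstage i}

/-- The middle-left bottleneck point of stage `h_j` of the H fractal (for `j ≥ 2`). -/
def mH (j : ℕ) : Pt :=
  (3 ^ (j - 1) + ((3 : ℤ) ^ (j - 2) - 1) / 2,
   3 ^ (j - 1) + ((3 : ℤ) ^ (j - 2) - 1) / 2 + 3 ^ (j - 2))

/-- The left-center of stage `h_i`. -/
def leftCenterH (i : ℕ) : Set Pt :=
  {p ∈ hstage i |
    3 ^ (i - 1) + ((3 : ℤ) ^ (i - 2) - 1) / 2 < p.1 ∧ p.1 < ((3 : ℤ) ^ i - 1) / 2}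

private lemma half_eq (x y : ℤ) (h : 2*x = 2*y) : x = y := by omega

private lemma pow3_mono {m d : ℕ} (h : m ≤ d) : (3:ℤ)^m ≤ 3^d := by
  exact pow_le_pow_right₀ (by norm_num) h

private lemma pow3_sub_one_even (m : ℕ) : ∃ d : ℤ, (3:ℤ)^m - 1 = 2*d := by
  induction m with
  | zero => exact ⟨0, by norm_num⟩
  | succ n ih =>
    obtain ⟨d, hd⟩ := ih
    exact ⟨3*d + 1, by rw [pow_succ]; linarith⟩

private lemma dig_eq (x v M w c : ℤ) (hw : 0 < w) (hx : x = M*(3*w) + v)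
    (hc0 : 0 ≤ c) (hc3 : c < 3) (hv1 : w*c ≤ v) (hv2 : v < w*(c+1)) :
    x / w % 3 = c := by
  have hvw : v - w*c < w := by nlinarith
  have h1 : v / w = c := by
    have e : v = (v - w*c) + c*w := by ring
    rw [e, Int.add_mul_ediv_right _ _ (ne_of_gt hw),
      Int.ediv_eq_zero_of_lt (by linarith) hvw, zero_add]
  have h2 : x / w = c + 3*M := by
    have e : x = v + (3*M)*w := by rw [hx]; ring
    rw [e, Int.add_mul_ediv_right _ _ (ne_of_gt hw), h1]
  rw [h2, Int.add_mul_emod_self_left]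
  exact Int.emod_eq_of_lt hc0 hc3

private lemma dig_range (x v M w c : ℤ) (hw : 0 < w) (hx : x = M*(3*w) + v)
    (h0 : 0 ≤ v) (h3 : v < 3*w) (hc : x / w % 3 = c) :
    w*c ≤ v ∧ v < w*(c+1) := by
  have hq0 : 0 ≤ v / w := Int.ediv_nonneg h0 (le_of_lt hw)
  have hdm := Int.mul_ediv_add_emod v w
  have hr0 := Int.emod_nonneg v (ne_of_gt hw)
  have hr1 := Int.emod_lt_of_pos v hw
  have hq3 : v / w < 3 := by nlinarith
  have key : x / w = v/w + 3*M := by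
    have e : x = v + (3*M)*w := by rw [hx]; ring
    rw [e, Int.add_mul_ediv_right _ _ (ne_of_gt hw)]
  have hcv : v / w = c := by
    rw [key, Int.add_mul_emod_self_left, Int.emod_eq_of_lt hq0 hq3] at hc
    exact hc
  rw [hcv] at hdm
  constructor
  · linarith
  · nlinarith

private lemma dig_of_lt (x : ℤ) (d : ℕ) (h0 : 0 ≤ x) (h : x < 3^d) :
    x / 3^d % 3 = 0 := by
  rw [Int.ediv_eq_zero_of_lt h0 h, Int.zero_emod]

private lemma dig_ne_one (x : ℤ) (h0 : 0 ≤ x) (h3 : x < 3) (hx : x ≠ 1) (d : ℕ) :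
    x / 3^d % 3 ≠ 1 := by
  cases d with
  | zero =>
    rw [pow_zero, Int.ediv_one, Int.emod_eq_of_lt h0 h3]
    exact hx
  | succ m =>
    rw [dig_of_lt x (m+1) h0 (lt_of_lt_of_le h3 (by simpa using pow3_mono (show 1 ≤ m+1 by omega)))]
    norm_num

private lemma dig_shift (x c : ℤ) (d D : ℕ) (h : d < D) :
    (x + 3^D * c) / 3^d % 3 = x / 3^d % 3 := by
  obtain ⟨e, rfl⟩ : ∃ e, D = d + 1 + e := ⟨D - (d+1), by omega⟩
  have e1 : x + 3^(d+1+e)*c = x + (3*(3^e*c)) * 3^d := by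
    rw [pow_add, pow_add, pow_one]; ring
  rw [e1, Int.add_mul_ediv_right _ _ (by positivity : (3:ℤ)^d ≠ 0),
    Int.add_mul_emod_self_left]

private lemma GH_facts (g : Pt) (hg : g ∈ GH) :
    0 ≤ g.1 ∧ g.1 < 3 ∧ 0 ≤ g.2 ∧ g.2 < 3 ∧ (g.1 = 1 → g.2 = 1) := by
  simp only [GH, Set.mem_insert_iff, Set.mem_singleton_iff] at hg
  rcases hg with h|h|h|h|h|h|h <;> subst h <;> norm_num

private lemma hstage_digits : ∀ (i : ℕ) (q : Pt), q ∈ hstage i →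
    0 ≤ q.1 ∧ q.1 < 3^i ∧ 0 ≤ q.2 ∧ q.2 < 3^i ∧
    ∀ d : ℕ, q.1 / 3^d % 3 = 1 → q.2 / 3^d % 3 = 1 := by
  intro i
  induction i with
  | zero => intro q hq; simp [hstage] at hq
  | succ n ih =>
    intro q hq
    cases n with
    | zero =>
      have hq' : q ∈ GH := hq
      obtain ⟨hg0, hg1, hg2, hg3, hg4⟩ := GH_facts q hq'
      refine ⟨hg0, by simpa using hg1, hg2, by simpa using hg3, ?_⟩
      intro d hd
      by_cases h1 : q.1 = 1
      · have h2 : q.2 = 1 := hg4 h1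
        rw [h1] at hd
        rw [h2]; exact hd
      · exact absurd hd (dig_ne_one q.1 hg0 hg1 h1 d)
    | succ m =>
      have hq' : q ∈ scaleAdd (3^(m+1)) (hstage (m+1)) GH := hq
      obtain ⟨pp, hpp, g, hg, hqe⟩ := hq'
      obtain ⟨hp0, hp1, hp2, hp3, hpd⟩ := ih pp hpp
      obtain ⟨hg0, hg1, hg2, hg3, hg4⟩ := GH_facts g hg
      have hX : (0:ℤ) < 3^(m+1) := by positivity
      have X3 : (3:ℤ)^(m+1+1) = 3 * 3^(m+1) := by rw [pow_succ]; ring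
      have hq1 : q.1 = pp.1 + 3^(m+1) * g.1 := by rw [hqe]
      have hq2 : q.2 = pp.2 + 3^(m+1) * g.2 := by rw [hqe]
      have hb1 : (3:ℤ)^(m+1)*g.1 ≤ 3^(m+1)*2 :=
        mul_le_mul_of_nonneg_left (by linarith) (le_of_lt hX)
      have hb2 : (3:ℤ)^(m+1)*g.2 ≤ 3^(m+1)*2 :=
        mul_le_mul_of_nonneg_left (by linarith) (le_of_lt hX)
      have hn1 : 0 ≤ (3:ℤ)^(m+1)*g.1 := mul_nonneg (le_of_lt hX) hg0
      have hn2 : 0 ≤ (3:ℤ)^(m+1)*g.2 := mul_nonneg (le_of_lt hX) hg2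
      refine ⟨by rw [hq1]; linarith, by rw [hq1, X3]; linarith,
        by rw [hq2]; linarith, by rw [hq2, X3]; linarith, ?_⟩
      intro d hd
      rw [hq1] at hd; rw [hq2]
      rcases Nat.lt_trichotomy d (m+1) with h | h | h
      · rw [dig_shift pp.2 g.2 d (m+1) h]
        rw [dig_shift pp.1 g.1 d (m+1) h] at hd
        exact hpd d hd
      · rw [h] at hd ⊢
        rw [show pp.1 + 3^(m+1)*g.1 = pp.1 + g.1*3^(m+1) from by ring,
          Int.add_mul_ediv_right _ _ (ne_of_gt hX),
          Int.ediv_eq_zero_of_lt hp0 hp1, zero_add,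
          Int.emod_eq_of_lt hg0 hg1] at hd
        rw [show pp.2 + 3^(m+1)*g.2 = pp.2 + g.2*3^(m+1) from by ring,
          Int.add_mul_ediv_right _ _ (ne_of_gt hX),
          Int.ediv_eq_zero_of_lt hp2 hp3, zero_add,
          Int.emod_eq_of_lt hg2 hg3]
        exact hg4 hd
      · exfalso
        have hle : (3:ℤ)^(m+1+1) ≤ 3^d := pow3_mono (by omega)
        have hb : pp.1 + 3^(m+1)*g.1 < 3^d := by linarith
        rw [dig_of_lt _ d (by linarith) hb] at hd
        norm_num at hd

/-- For `3 ≤ j < k`, every grid path in `𝐇` that starts at the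
middle-left bottleneck point `m_j` of `h_j`, stays in the left-center of `h_j`, and
ascends vertically by at least `2·3^{j-3}`, has a point whose translate by
`m_k − m_j` lies outside `𝐇`. -/
theorem hFractal_middle_left_growth_out_of_bounds :
    ∀ j k : ℕ, 3 ≤ j → j < k →
      ∀ (n : ℕ) (p : ℕ → Pt),
        (∀ l ≤ n, p l ∈ HFractal) →
        (∀ l < n, adjPt (p l) (p (l + 1))) →
        p 0 = mH j →
        (∀ l, 1 ≤ l → l ≤ n → p l ∈ leftCenterH j) →
        (mH j).2 + 2 * 3 ^ (j - 3) ≤ (p n).2 →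
        ∃ l ≤ n, p l + mH k - mH j ∉ HFractal := by
  intro j k hj hjk n p hH hadj h0 hlc hrise
  obtain ⟨a, rfl⟩ : ∃ a, j = 3 + a := ⟨j - 3, by omega⟩
  obtain ⟨b, rfl⟩ : ∃ b, k = 3 + a + 1 + b := ⟨k - (3 + a) - 1, by omega⟩
  cases n with
  | zero =>
    exfalso
    rw [h0] at hrise
    have hpow : (0:ℤ) < 3^(3+a-3) := by positivity
    linarith
  | succ n' =>
    have ht : (1:ℤ) ≤ 3^a := by simpa using pow3_mono (Nat.zero_le a)
    have hs : (1:ℤ) ≤ 3^b := by simpa using pow3_mono (Nat.zero_le b)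
    have e1 : (3:ℤ)^(a+1) = 3*3^a := by rw [pow_succ]; ring
    have e2 : (3:ℤ)^(a+2) = 9*3^a := by rw [pow_add]; ring
    have e3 : (3:ℤ)^(3+a) = 27*3^a := by rw [pow_add]; ring
    have ek1 : (3:ℤ)^(a+b+3) = 27*(3^a*3^b) := by rw [pow_add, pow_add]; ring
    have ek2 : (3:ℤ)^(a+b+2) = 9*(3^a*3^b) := by rw [pow_add, pow_add]; ring
    obtain ⟨d1, hd1⟩ := pow3_sub_one_even (a+1)
    obtain ⟨d2, hd2⟩ := pow3_sub_one_even (a+b+2)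
    obtain ⟨d3, hd3⟩ := pow3_sub_one_even (3+a)
    obtain ⟨ee, he⟩ := pow3_sub_one_even b
    have hd1' : 3*3^a - 1 = 2*d1 := by rw [← e1]; exact hd1
    have hd2' : 9*(3^a*3^b) - 1 = 2*d2 := by rw [← ek2]; exact hd2
    have hd3' : 27*3^a - 1 = 2*d3 := by rw [← e3]; exact hd3
    have div1 : ((3:ℤ)^(a+1) - 1)/2 = d1 := by
      rw [hd1, Int.mul_ediv_cancel_left _ two_ne_zero]
    have div2 : ((3:ℤ)^(a+b+2) - 1)/2 = d2 := by
      rw [hd2, Int.mul_ediv_cancel_left _ two_ne_zero]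
    have div3 : ((3:ℤ)^(3+a) - 1)/2 = d3 := by
      rw [hd3, Int.mul_ediv_cancel_left _ two_ne_zero]
    have hd1pos : 0 ≤ d1 := by linarith
    have hd2eq : d2 = d1 + 3*3^a + 9*(3^a*ee) := by
      apply half_eq
      linear_combination (-1) * hd2' + hd1' + 9*(3:ℤ)^a * he
    have m1j : (mH (3+a)).1 = 9*3^a + d1 := by
      show (3:ℤ)^(3+a-1) + ((3:ℤ)^(3+a-2) - 1)/2 = 9*3^a + d1
      rw [show 3+a-1 = a+2 from by omega, show 3+a-2 = a+1 from by omega, div1, e2]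
    have m2j : (mH (3+a)).2 = 12*3^a + d1 := by
      show (3:ℤ)^(3+a-1) + ((3:ℤ)^(3+a-2) - 1)/2 + 3^(3+a-2) = 12*3^a + d1
      rw [show 3+a-1 = a+2 from by omega, show 3+a-2 = a+1 from by omega, div1, e2, e1]
      ring
    have m1k : (mH (3+a+1+b)).1 = 27*(3^a*3^b) + d2 := by
      show (3:ℤ)^(3+a+1+b-1) + ((3:ℤ)^(3+a+1+b-2) - 1)/2 = 27*(3^a*3^b) + d2
      rw [show 3+a+1+b-1 = a+b+3 from by omega, show 3+a+1+b-2 = a+b+2 from by omega,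
        div2, ek1]
    have m2k : (mH (3+a+1+b)).2 = 36*(3^a*3^b) + d2 := by
      show (3:ℤ)^(3+a+1+b-1) + ((3:ℤ)^(3+a+1+b-2) - 1)/2 + 3^(3+a+1+b-2)
          = 36*(3^a*3^b) + d2
      rw [show 3+a+1+b-1 = a+b+3 from by omega, show 3+a+1+b-2 = a+b+2 from by omega,
        div2, ek1, ek2]
      ring
    have hq := hlc (n'+1) (by omega) (le_refl _)
    simp only [leftCenterH, Set.mem_setOf_eq, Set.mem_sep_iff] at hq
    obtain ⟨hqmem, hqx1, hqx2⟩ := hq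
    rw [show 3+a-1 = a+2 from by omega, show 3+a-2 = a+1 from by omega, div1, e2] at hqx1
    rw [div3] at hqx2
    rw [m2j, show 3+a-3 = a from by omega] at hrise
    obtain ⟨hx0, hx1, hy0, hy1, Hq⟩ := hstage_digits (3+a) (p (n'+1)) hqmem
    rw [e3] at hx1 hy1
    -- digit a+2 of x is 1
    have A1 : (p (n'+1)).1 / 3^(a+2) % 3 = 1 := by
      rw [e2]
      exact dig_eq _ _ 0 (9*3^a) 1 (by linarith) (by ring) (by norm_num) (by norm_num)
        (by linarith) (by linarith)
    have A2 : (p (n'+1)).2 / 3^(a+2) % 3 = 1 := Hq (a+2) A1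
    have B12 : 9*3^a*1 ≤ (p (n'+1)).2 ∧ (p (n'+1)).2 < 9*3^a*(1+1) := by
      refine dig_range _ _ 0 (9*3^a) 1 (by linarith) (by ring) hy0 (by linarith) ?_
      rw [← e2]; exact A2
    -- digit a+1 of y is 2
    have C1 : (p (n'+1)).2 / 3^(a+1) % 3 = 2 := by
      rw [e1]
      exact dig_eq _ ((p (n'+1)).2 - 9*3^a) 1 (3*3^a) 2 (by linarith) (by ring)
        (by norm_num) (by norm_num) (by linarith) (by linarith [B12.2])
    -- digit a+1 of x is 0, hence x < 12·3^a
    have D0 : (p (n'+1)).1 / 3^(a+1) % 3 ≠ 1 := by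
      intro h
      have h2 := Hq (a+1) h
      rw [C1] at h2
      exact absurd h2 (by norm_num)
    obtain ⟨c, hcdef⟩ : ∃ c : ℤ, (p (n'+1)).1 / 3^(a+1) % 3 = c := ⟨_, rfl⟩
    have hc0 : 0 ≤ c := by rw [← hcdef]; exact Int.emod_nonneg _ (by norm_num)
    have hc3 : c < 3 := by rw [← hcdef]; exact Int.emod_lt_of_pos _ (by norm_num)
    have hc1 : c ≠ 1 := by rw [← hcdef]; exact D0
    have DR := dig_range _ ((p (n'+1)).1 - 9*3^a) 1 (3*3^a) c (by linarith) (by ring)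
      (by linarith) (by linarith) (by rw [← e1]; exact hcdef)
    have hc2 : c ≠ 2 := by
      intro h
      rw [h] at DR
      have := DR.1
      linarith
    have hcz : c = 0 := by omega
    rw [hcz] at DR
    have D1 : (p (n'+1)).1 < 12*3^a := by
      have := DR.2
      linarith
    -- the witness
    refine ⟨n'+1, le_refl _, ?_⟩
    intro hmem
    obtain ⟨i, hi1, hPi⟩ := hmem
    obtain ⟨hP0, hP1b, hP2b, hP3b, hdP⟩ := hstage_digits i _ hPi
    have hP1 : (p (n'+1) + mH (3+a+1+b) - mH (3+a)).1
        = (p (n'+1)).1 + (27*(3^a*3^b) + d2) - (9*3^a + d1) := by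
      simp [Prod.fst_add, Prod.fst_sub, m1k, m1j]
    have hP2 : (p (n'+1) + mH (3+a+1+b) - mH (3+a)).2
        = (p (n'+1)).2 + (36*(3^a*3^b) + d2) - (12*3^a + d1) := by
      simp [Prod.snd_add, Prod.snd_sub, m2k, m2j]
    have GX : (p (n'+1) + mH (3+a+1+b) - mH (3+a)).1 / 3^(a+1) % 3 = 1 := by
      rw [hP1, e1]
      exact dig_eq _ ((p (n'+1)).1 - 6*3^a) (3*3^b + ee) (3*3^a) 1 (by linarith)
        (by linear_combination hd2eq) (by norm_num) (by norm_num)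
        (by linarith) (by linarith)
    have GY : (p (n'+1) + mH (3+a+1+b) - mH (3+a)).2 / 3^(a+1) % 3 = 2 := by
      rw [hP2, e1]
      exact dig_eq _ ((p (n'+1)).2 - 9*3^a) (4*3^b + ee) (3*3^a) 2 (by linarith)
        (by linear_combination hd2eq) (by norm_num) (by norm_num)
        (by linarith) (by linarith [B12.2])
    have hfin := hdP (a+1) GX
    rw [GY] at hfin
    exact absurd hfin (by norm_num)
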